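/- (Theorem 2, empirical-Bernstein confidence sequence.) Let c > 0 and α ∈ (0,1). Suppose E[δ̂_t | 𝒢_{t−1}] = δ_t and |δ̂_t| ≤ c/2 a.s. for every t ≥ 1; let (γ_t)_{t≥1} be a [−c/2, c/2]-valued predictable process and set V̂_t = Σ_{i=1}^t (δ̂_i − γ_i)². If u is a sub-exponential uniform boundary with crossing probability α/2 and scale c, then P( for all t ≥ 1, |Δ̂_t − Δ_t| < u(V̂_t)/t ) ≥ 1 − α; i.e., the intervals (Δ̂_t − u(V̂_t)/t, Δ̂_t + u(V̂_t)/t) form a (1−α)-level confidence sequence for Δ_t. -/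

import Mathlib

/-!
By Fan's inequality `exp (λz - ψ_{E,c}(λ) z²) ≤ 1 + λz` for `z ≥ -c`, applied to
`z = δ̂_t - γ_t`, together with `E[δ̂_t - γ_t | 𝒢_{t-1}] = δ_t - γ_t` and `1 + x ≤ eˣ`, the process
`exp (λ S_t - ψ_{E,c}(λ) V̂_t)` with `S_t = Σ_{i ≤ t} (δ̂_i - δ_i)` is a nonnegative
supermartingale for every `λ ∈ [0, 1/c)`. The uniform boundary therefore bounds the probability
that `S_t` ever reaches `u(V̂_t)` by `α/2`; the same argument for `-δ̂, -δ, -γ` bounds the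
probability that `-S_t` does, and a union bound gives the confidence sequence.
-/

open MeasureTheory Set

/-- The sub-exponential cumulant generating function with scale `c`:
`ψ_{E,c}(λ) = c⁻²(−log(1−cλ) − cλ)` for `λ ∈ [0, 1/c)`. -/
noncomputable def psiE (c l : ℝ) : ℝ := (-Real.log (1 - c * l) - c * l) / c ^ 2

/-- `u : [0,∞) → ℝ` is a *sub-exponential uniform boundary with crossing probability `α` and
scale `c`* if for every filtered probability space and every pair of adapted real processes
`(S_t, V_t)_{t≥0}` with `S_0 = V_0 = 0` and `V_t ≥ 0`, such that for every `λ ∈ [0, 1/c)`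
there exists a nonnegative supermartingale `(L_t(λ))_{t≥0}` with `E[L_0(λ)] ≤ 1` and
`exp(λ S_t − ψ_{E,c}(λ) V_t) ≤ L_t(λ)` a.s. for all `t`, one has
`P(∃ t ≥ 1 : S_t ≥ u(V_t)) ≤ α`. -/
def IsSubExponentialUniformBoundary (u : ℝ → ℝ) (α c : ℝ) : Prop :=
  ∀ (Ω : Type) (m0 : MeasurableSpace Ω) (P : Measure Ω), IsProbabilityMeasure P →
    ∀ (𝒢 : Filtration ℕ m0) (S V : ℕ → Ω → ℝ),
      Adapted 𝒢 S → Adapted 𝒢 V →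
      (∀ ω, S 0 ω = 0) → (∀ ω, V 0 ω = 0) → (∀ t ω, 0 ≤ V t ω) →
      (∀ l : ℝ, l ∈ Ico (0:ℝ) (1 / c) →
        ∃ L : ℕ → Ω → ℝ,
          Supermartingale L 𝒢 P ∧ (∀ t ω, 0 ≤ L t ω) ∧ (∫ ω, L 0 ω ∂P) ≤ 1 ∧
          ∀ t : ℕ, ∀ᵐ ω ∂P, Real.exp (l * S t ω - psiE c l * V t ω) ≤ L t ω) →
      P {ω | ∃ t : ℕ, 1 ≤ t ∧ u (V t ω) ≤ S t ω} ≤ ENNReal.ofReal α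

open Real

lemma sub_log_one_add_eq_integral {z : ℝ} (hz : -1 < z) :
    z - log (1 + z) = ∫ s in (0:ℝ)..1, s * z ^ 2 / (1 + s * z) := by
  have hpos : ∀ s ∈ uIcc (0:ℝ) 1, 0 < 1 + s * z := by
    intro s hs
    rw [uIcc_of_le zero_le_one] at hs
    rcases le_or_gt 0 z with h | h
    · nlinarith [mul_nonneg hs.1 h]
    · nlinarith [mul_nonneg (sub_nonneg.2 hs.2) (neg_nonneg.2 h.le)]
  have hderiv : ∀ s ∈ uIcc (0:ℝ) 1,
      HasDerivAt (fun s => s * z - log (1 + s * z)) (s * z ^ 2 / (1 + s * z)) s := by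
    intro s hs
    have hlin : HasDerivAt (fun s : ℝ => s * z) z s := by
      simpa using (hasDerivAt_id s).mul_const z
    refine (hlin.sub ((hlin.const_add 1).log (hpos s hs).ne')).congr_deriv ?_
    rw [eq_div_iff (hpos s hs).ne', sub_mul, div_mul_cancel₀ _ (hpos s hs).ne']
    ring
  have hint : IntervalIntegrable (fun s => s * z ^ 2 / (1 + s * z)) volume 0 1 :=
    (ContinuousOn.div (by fun_prop) (by fun_prop) fun s hs => (hpos s hs).ne').intervalIntegrable
  rw [intervalIntegral.integral_eq_sub_of_hasDerivAt hderiv hint]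
  simp

lemma mul_sub_log_one_add_mul_le {l x : ℝ} (hl₀ : 0 ≤ l) (hl₁ : l < 1) (hx : -1 ≤ x) :
    l * x - log (1 + l * x) ≤ (-log (1 - l) - l) * x ^ 2 := by
  have hden : ∀ s ∈ Icc (0:ℝ) 1, 0 < 1 - s * l ∧ 1 - s * l ≤ 1 + s * (l * x) := fun s hs =>
    ⟨by nlinarith [hs.1, hs.2],
      by nlinarith [mul_nonneg hs.1 (mul_nonneg hl₀ (neg_le_iff_add_nonneg.1 hx))]⟩
  have hψ : -log (1 - l) - l = ∫ s in (0:ℝ)..1, s * l ^ 2 / (1 - s * l) := by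
    have := sub_log_one_add_eq_integral (z := -l) (by linarith)
    simp only [neg_sq, mul_neg, ← sub_eq_add_neg] at this
    linarith
  rw [sub_log_one_add_eq_integral (by nlinarith), hψ, ← intervalIntegral.integral_mul_const]
  refine intervalIntegral.integral_mono_on zero_le_one ?_ ?_ fun s hs => ?_
  · refine (ContinuousOn.div (by fun_prop) (by fun_prop) fun s hs => ?_).intervalIntegrable
    rw [uIcc_of_le zero_le_one] at hs
    exact (lt_of_lt_of_le (hden s hs).1 (hden s hs).2).ne'
  · refine ((ContinuousOn.div (by fun_prop) (by fun_prop) fun s hs => ?_).mul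
      continuousOn_const).intervalIntegrable
    rw [uIcc_of_le zero_le_one] at hs
    exact (hden s hs).1.ne'
  · calc s * (l * x) ^ 2 / (1 + s * (l * x)) ≤ s * (l * x) ^ 2 / (1 - s * l) :=
          div_le_div_of_nonneg_left (by have := hs.1; positivity) (hden s hs).1 (hden s hs).2
      _ = s * l ^ 2 / (1 - s * l) * x ^ 2 := by ring

lemma psiE_nonneg {c l : ℝ} (hc : 0 < c) (hcl : c * l < 1) : 0 ≤ psiE c l := by
  have := log_le_sub_one_of_pos (x := 1 - c * l) (by linarith)
  unfold psiE
  exact div_nonneg (by linarith) (by positivity)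

lemma mul_sub_psiE_mul_sq_le {c l a b : ℝ} (hc : 0 < c) (hl : 0 ≤ l) (hcl : c * l < 1)
    (ha : a ≤ c) : l * a - psiE c l * b ^ 2 ≤ l * c := by
  nlinarith [mul_le_mul_of_nonneg_left ha hl, mul_nonneg (psiE_nonneg hc hcl) (sq_nonneg b)]

/-- Fan's inequality. -/
lemma exp_mul_sub_psiE_mul_sq_le {c l z : ℝ} (hc : 0 < c) (hl : 0 ≤ l) (hcl : c * l < 1)
    (hz : -c ≤ z) : exp (l * z - psiE c l * z ^ 2) ≤ 1 + l * z := by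
  have hlog := mul_sub_log_one_add_mul_le (l := c * l) (x := z / c) (by positivity) hcl
    (by rw [le_div_iff₀ hc]; linarith)
  have e₁ : c * l * (z / c) = l * z := by field_simp
  have e₂ : (-log (1 - c * l) - c * l) * (z / c) ^ 2 = psiE c l * z ^ 2 := by
    unfold psiE; field_simp
  rw [e₁, e₂] at hlog
  calc exp (l * z - psiE c l * z ^ 2) ≤ exp (log (1 + l * z)) := exp_le_exp.2 (by linarith)
    _ = 1 + l * z := exp_log (by nlinarith)

section

variable {Ω : Type*} {m m0 : MeasurableSpace Ω} {P : Measure Ω}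

lemma ae_abs_le_of_condExp_ae_eq {X D : Ω → ℝ} {R : ℝ} (hX : ∀ᵐ ω ∂P, |X ω| ≤ R)
    (hD : P[X|m] =ᵐ[P] D) : ∀ᵐ ω ∂P, |D ω| ≤ R := by
  filter_upwards [ae_bdd_abs_condExp_of_ae_bdd_abs (m := m) hX, hD] with ω h₁ h₂
  rwa [← h₂]

lemma integrable_exp_of_ae_le [IsFiniteMeasure P] {f : Ω → ℝ} (hf : AEStronglyMeasurable f P)
    {B : ℝ} (hB : ∀ᵐ ω ∂P, f ω ≤ B) : Integrable (fun ω => exp (f ω)) P := by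
  refine .of_bound (continuous_exp.comp_aestronglyMeasurable hf) (exp B) ?_
  filter_upwards [hB] with ω h
  rw [norm_of_nonneg (exp_pos _).le]
  exact exp_le_exp.2 h

/-- Writing the integrand as `exp (l * (G - D)) * exp (l * (X - G) - psiE c l * (X - G) ^ 2)`, the
first factor is `m`-measurable and Fan's inequality bounds the second by `1 + l * (X - G)`, whose
conditional expectation is `1 + l * (D - G) ≤ exp (l * (D - G))`. -/
theorem condExp_exp_mul_sub_psiE_mul_sq_le_one [IsFiniteMeasure P] (hm : m ≤ m0)
    {c l : ℝ} (hc : 0 < c) (hl : 0 ≤ l) (hcl : c * l < 1) {X D G : Ω → ℝ} (hX : Measurable X)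
    (hD : Measurable[m] D) (hG : Measurable[m] G) (hG_mem : ∀ ω, G ω ∈ Icc (-(c / 2)) (c / 2))
    (hX_bdd : ∀ᵐ ω ∂P, |X ω| ≤ c / 2) (hcond : P[X|m] =ᵐ[P] D) :
    P[fun ω => exp (l * (X ω - D ω) - psiE c l * (X ω - G ω) ^ 2)|m] ≤ᵐ[P] 1 := by
  set ψ := psiE c l
  have hD_bdd := ae_abs_le_of_condExp_ae_eq hX_bdd hcond
  have hD₀ : Measurable D := hD.mono hm le_rfl
  have hG₀ : Measurable G := hG.mono hm le_rfl
  set A : Ω → ℝ := fun ω => exp (l * (G ω - D ω))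
  set Z : Ω → ℝ := fun ω => exp (l * (X ω - G ω) - ψ * (X ω - G ω) ^ 2)
  have hY : (fun ω => exp (l * (X ω - D ω) - ψ * (X ω - G ω) ^ 2)) = A * Z := by
    ext ω
    simp only [A, Z, Pi.mul_apply, ← exp_add]
    ring_nf
  have hZ_int : Integrable Z P := by
    refine integrable_exp_of_ae_le (by fun_prop) (B := l * c) ?_
    filter_upwards [hX_bdd] with ω hω
    exact mul_sub_psiE_mul_sq_le hc hl hcl (by linarith [(abs_le.1 hω).2, (hG_mem ω).1])
  have hY_int : Integrable (A * Z) P := by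
    rw [← hY]
    refine integrable_exp_of_ae_le (by fun_prop) (B := l * c) ?_
    filter_upwards [hX_bdd, hD_bdd] with ω hX hD
    exact mul_sub_psiE_mul_sq_le hc hl hcl (by linarith [(abs_le.1 hX).2, (abs_le.1 hD).1])
  have hX_int : Integrable X P :=
    .of_bound hX.aestronglyMeasurable (c / 2) (by simpa only [Real.norm_eq_abs] using hX_bdd)
  have hG_int : Integrable G P :=
    .of_bound hG₀.aestronglyMeasurable (c / 2) (ae_of_all _ fun ω => abs_le.2 (hG_mem ω))
  have hW : P[fun ω => 1 + l * (X ω - G ω)|m] =ᵐ[P] fun ω => 1 + l * (D ω - G ω) := by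
    have hsplit : (fun ω => 1 + l * (X ω - G ω)) = (fun ω => 1 - l * G ω) + l • X := by
      ext ω; simp only [Pi.add_apply, Pi.smul_apply, smul_eq_mul]; ring
    have hint : Integrable (fun ω => 1 - l * G ω) P := (integrable_const 1).sub (hG_int.const_mul l)
    rw [hsplit]
    filter_upwards [condExp_add hint (hX_int.smul l) m, condExp_smul l X m, hcond] with ω h₁ h₂ h₃
    rw [h₁, Pi.add_apply, h₂, condExp_of_stronglyMeasurable hm (by fun_prop) hint,
      Pi.smul_apply, h₃, smul_eq_mul]
    ring
  have hZ_le : Z ≤ᵐ[P] fun ω => 1 + l * (X ω - G ω) := by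
    filter_upwards [hX_bdd] with ω hω
    exact exp_mul_sub_psiE_mul_sq_le hc hl hcl (by linarith [(abs_le.1 hω).1, (hG_mem ω).2])
  rw [hY]
  filter_upwards [condExp_mul_of_stronglyMeasurable_left (m := m) (by fun_prop) hY_int hZ_int,
    condExp_mono (m := m) hZ_int ((integrable_const 1).add ((hX_int.sub hG_int).const_mul l)) hZ_le,
    hW] with ω h₁ h₂ h₃
  rw [h₁, Pi.mul_apply, Pi.one_apply]
  calc A ω * P[Z|m] ω ≤ A ω * exp (l * (D ω - G ω)) := by
        gcongr
        exact (h₂.trans_eq h₃).trans (by linarith [add_one_le_exp (l * (D ω - G ω))])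
    _ = 1 := by rw [← exp_add]; ring_nf; exact exp_zero

theorem adapted_sum_Icc {𝒢 : Filtration ℕ m0} {Y : ℕ → Ω → ℝ}
    (hY : ∀ t, 1 ≤ t → Measurable[𝒢 t] (Y t)) :
    Adapted 𝒢 fun t ω => ∑ i ∈ Finset.Icc 1 t, Y i ω := fun _ =>
  Finset.measurable_sum _ fun i hi =>
    (hY i (Finset.mem_Icc.1 hi).1).mono (𝒢.mono (Finset.mem_Icc.1 hi).2) le_rfl

theorem supermartingale_exp_sum [IsFiniteMeasure P] {𝒢 : Filtration ℕ m0} {ξ : ℕ → Ω → ℝ}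
    {B : ℝ} (hξ : ∀ t, 1 ≤ t → Measurable[𝒢 t] (ξ t))
    (hξ_le : ∀ t, 1 ≤ t → ∀ᵐ ω ∂P, ξ t ω ≤ B)
    (hξ_condExp : ∀ t, 1 ≤ t → P[fun ω => exp (ξ t ω)|𝒢 (t - 1)] ≤ᵐ[P] 1) :
    Supermartingale (fun t ω => exp (∑ i ∈ Finset.Icc 1 t, ξ i ω)) 𝒢 P := by
  set L : ℕ → Ω → ℝ := fun t ω => exp (∑ i ∈ Finset.Icc 1 t, ξ i ω)
  have hsum := adapted_sum_Icc hξ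
  have hL_adapted : StronglyAdapted 𝒢 L := fun t =>
    (measurable_exp.comp (hsum t)).stronglyMeasurable
  have hL_int : ∀ t, Integrable (L t) P := fun t => by
    refine integrable_exp_of_ae_le ((hsum t).mono (𝒢.le t) le_rfl).aestronglyMeasurable
      (B := (Finset.Icc 1 t).card • B) ?_
    filter_upwards [(Filter.eventually_all_finset _).2 fun i hi =>
      hξ_le i (Finset.mem_Icc.1 hi).1] with ω hω
    exact Finset.sum_le_card_nsmul _ _ _ hω
  refine supermartingale_nat hL_adapted hL_int fun t => ?_
  have hsucc : L (t + 1) = L t * fun ω => exp (ξ (t + 1) ω) := by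
    ext ω
    simp only [L, Pi.mul_apply, Finset.sum_Icc_succ_top (Nat.le_add_left 1 t), exp_add]
  have hexp_int : Integrable (fun ω => exp (ξ (t + 1) ω)) P :=
    integrable_exp_of_ae_le ((hξ (t + 1) (by omega)).mono (𝒢.le _) le_rfl).aestronglyMeasurable
      (hξ_le (t + 1) (by omega))
  rw [hsucc]
  filter_upwards [condExp_mul_of_stronglyMeasurable_left (hL_adapted t) (hsucc ▸ hL_int (t + 1))
    hexp_int, hξ_condExp (t + 1) (by omega)] with ω h₁ h₂
  rw [h₁, Pi.mul_apply]
  exact mul_le_of_le_one_right (exp_pos _).le h₂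

end

theorem supermartingale_map_of_comp {Ω E : Type*} {m0 : MeasurableSpace Ω} {mE : MeasurableSpace E}
    {P : Measure Ω} [IsFiniteMeasure P] {𝒢 : Filtration ℕ m0} {ℱ : Filtration ℕ mE} {φ : Ω → E}
    (hφ : Measurable φ) (hφ_adapted : ∀ t, Measurable[𝒢 t, ℱ t] φ) {f : ℕ → E → ℝ}
    (hf : StronglyAdapted ℱ f) (hfφ : Supermartingale (fun t => f t ∘ φ) 𝒢 P) :
    Supermartingale f ℱ (P.map φ) := by
  have hf_meas : ∀ t, AEStronglyMeasurable (f t) (P.map φ) := fun t =>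
    ((hf t).mono (ℱ.le t)).aestronglyMeasurable
  refine supermartingale_of_setIntegral_succ_le hf
    (fun t => (integrable_map_measure (hf_meas t) hφ.aemeasurable).2 (hfφ.integrable t))
    fun t s hs => ?_
  rw [setIntegral_map (ℱ.le t s hs) (hf_meas _) hφ.aemeasurable,
    setIntegral_map (ℱ.le t s hs) (hf_meas _) hφ.aemeasurable]
  exact hfφ.setIntegral_le (Nat.le_succ t) (hφ_adapted t hs)

theorem measurable_piLE_apply {X : ℕ → Type*} [∀ i, MeasurableSpace (X i)] {j t : ℕ} (hjt : j ≤ t) :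
    Measurable[Filtration.piLE t] fun x : (i : ℕ) → X i => x j :=
  (measurable_pi_apply (⟨j, mem_Iic.2 hjt⟩ : Iic t)).comp (comap_measurable (Preorder.restrictLe t))

/-- The boundary property only speaks about sample spaces in `Type`, so the processes are pushed
forward to the path space `ℕ → ℝ × ℝ`. There `(x t).1 - (x 0).1` and `|(x t).2 - (x 0).2|`
stand for `S t` and `V t`: they vanish at `t = 0` and are nonnegative on every path, as the
definition demands, and agree with `S` and `V` on the image. -/
theorem IsSubExponentialUniformBoundary.measure_le {u : ℝ → ℝ} {α c : ℝ}
    (hu : IsSubExponentialUniformBoundary u α c) {Ω : Type*} {m0 : MeasurableSpace Ω}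
    {P : Measure Ω} [IsProbabilityMeasure P] (𝒢 : Filtration ℕ m0) {S V : ℕ → Ω → ℝ}
    (hS : Adapted 𝒢 S) (hV : Adapted 𝒢 V) (hS₀ : ∀ ω, S 0 ω = 0) (hV₀ : ∀ ω, V 0 ω = 0)
    (hV_nonneg : ∀ t ω, 0 ≤ V t ω)
    (hsuper : ∀ l ∈ Ico (0:ℝ) (1 / c),
      Supermartingale (fun t ω => exp (l * S t ω - psiE c l * V t ω)) 𝒢 P) :
    P {ω | ∃ t, 1 ≤ t ∧ u (V t ω) ≤ S t ω} ≤ ENNReal.ofReal α := by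
  set φ : Ω → ℕ → ℝ × ℝ := fun ω t => (S t ω, V t ω)
  set S' : ℕ → (ℕ → ℝ × ℝ) → ℝ := fun t x => (x t).1 - (x 0).1
  set V' : ℕ → (ℕ → ℝ × ℝ) → ℝ := fun t x => |(x t).2 - (x 0).2|
  have hS'φ : ∀ t ω, S' t (φ ω) = S t ω := fun t ω => by simp [S', φ, hS₀]
  have hV'φ : ∀ t ω, V' t (φ ω) = V t ω := fun t ω => by
    simp [V', φ, hV₀, abs_of_nonneg (hV_nonneg t ω)]
  have hφ : Measurable φ := measurable_pi_lambda _ fun t => hS.measurable.prodMk hV.measurable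
  have hφ_adapted : ∀ t, Measurable[𝒢 t, Filtration.piLE t] φ := fun t => by
    rw [measurable_iff_comap_le]
    change (MeasurableSpace.pi.comap (Preorder.restrictLe t)).comap φ ≤ 𝒢 t
    have : Measurable[𝒢 t] (Preorder.restrictLe t ∘ φ) :=
      @measurable_pi_lambda _ _ _ (𝒢 t) _ _ fun j =>
        (hS.measurable_le (mem_Iic.1 j.2)).prodMk (hV.measurable_le (mem_Iic.1 j.2))
    rw [MeasurableSpace.comap_comp]
    exact this.comap_le
  have hS' : Adapted Filtration.piLE S' := fun t =>
    (measurable_piLE_apply le_rfl).fst.sub (measurable_piLE_apply (Nat.zero_le t)).fst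
  have hV' : Adapted Filtration.piLE V' := fun t =>
    continuous_abs.measurable.comp
      ((measurable_piLE_apply le_rfl).snd.sub (measurable_piLE_apply (Nat.zero_le t)).snd)
  have := Measure.isProbabilityMeasure_map (μ := P) hφ.aemeasurable
  have hcross := hu (ℕ → ℝ × ℝ) inferInstance (P.map φ) inferInstance Filtration.piLE S' V' hS' hV'
    (by simp [S']) (by simp [V']) (fun _ _ => abs_nonneg _) fun l hl =>
      ⟨fun t x => exp (l * S' t x - psiE c l * V' t x), supermartingale_map_of_comp hφ hφ_adapted
        (fun t => (measurable_exp.comp (((hS' t).const_mul l).sub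
          ((hV' t).const_mul (psiE c l)))).stronglyMeasurable)
        (by simpa only [Function.comp_def, hS'φ, hV'φ] using hsuper l hl),
        fun _ _ => (exp_pos _).le, by simp [S', V'], fun _ => ae_of_all _ fun _ => le_rfl⟩
  calc P {ω | ∃ t, 1 ≤ t ∧ u (V t ω) ≤ S t ω}
      = P (φ ⁻¹' {x | ∃ t, 1 ≤ t ∧ u (V' t x) ≤ S' t x}) := by
        congr 1; ext ω; simp only [mem_preimage, mem_ofPred_eq, hS'φ, hV'φ]
    _ ≤ P.map φ {x | ∃ t, 1 ≤ t ∧ u (V' t x) ≤ S' t x} := Measure.le_map_apply hφ.aemeasurable _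
    _ ≤ ENNReal.ofReal α := hcross

section Bernstein

variable {Ω : Type*} {m0 : MeasurableSpace Ω} {P : Measure Ω} [IsProbabilityMeasure P]
  {𝒢 : Filtration ℕ m0} {c β : ℝ} {X D G : ℕ → Ω → ℝ} {u : ℝ → ℝ}

theorem measure_exists_le_sum_sub_le (hc : 0 < c)
    (hX : ∀ t, 1 ≤ t → Measurable[𝒢 t] (X t)) (hD : ∀ t, 1 ≤ t → Measurable[𝒢 (t - 1)] (D t))
    (hG : ∀ t, 1 ≤ t → Measurable[𝒢 (t - 1)] (G t))
    (hG_mem : ∀ t ω, G t ω ∈ Icc (-(c / 2)) (c / 2))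
    (hcond : ∀ t, 1 ≤ t → P[X t|𝒢 (t - 1)] =ᵐ[P] D t)
    (hX_bdd : ∀ t, 1 ≤ t → ∀ᵐ ω ∂P, |X t ω| ≤ c / 2)
    (hu : IsSubExponentialUniformBoundary u β c) :
    P {ω | ∃ t, 1 ≤ t ∧ u (∑ i ∈ Finset.Icc 1 t, (X i ω - G i ω) ^ 2)
      ≤ ∑ i ∈ Finset.Icc 1 t, (X i ω - D i ω)} ≤ ENNReal.ofReal β := by
  have hXD : ∀ t, 1 ≤ t → Measurable[𝒢 t] fun ω => X t ω - D t ω := fun t ht =>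
    (hX t ht).sub ((hD t ht).mono (𝒢.mono (Nat.sub_le t 1)) le_rfl)
  have hXG : ∀ t, 1 ≤ t → Measurable[𝒢 t] fun ω => (X t ω - G t ω) ^ 2 := fun t ht =>
    ((hX t ht).sub ((hG t ht).mono (𝒢.mono (Nat.sub_le t 1)) le_rfl)).pow_const 2
  refine hu.measure_le 𝒢 (adapted_sum_Icc hXD) (adapted_sum_Icc hXG) (by simp) (by simp)
    (fun t ω => Finset.sum_nonneg fun i _ => sq_nonneg _) fun l ⟨hl, hlc⟩ => ?_
  have hcl : c * l < 1 := by rwa [lt_div_iff₀ hc, mul_comm] at hlc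
  simp only [Finset.mul_sum, ← Finset.sum_sub_distrib]
  refine supermartingale_exp_sum (B := l * c)
    (fun t ht => ((hXD t ht).const_mul l).sub ((hXG t ht).const_mul _)) (fun t ht => ?_)
    fun t ht => condExp_exp_mul_sub_psiE_mul_sq_le_one (𝒢.le _) hc hl hcl
      ((hX t ht).mono (𝒢.le t) le_rfl) (hD t ht) (hG t ht) (hG_mem t) (hX_bdd t ht) (hcond t ht)
  filter_upwards [hX_bdd t ht, ae_abs_le_of_condExp_ae_eq (hX_bdd t ht) (hcond t ht)]
    with ω hX hD
  exact mul_sub_psiE_mul_sq_le hc hl hcl (by linarith [(abs_le.1 hX).2, (abs_le.1 hD).1])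

theorem measure_exists_le_abs_sum_sub_le (hc : 0 < c)
    (hX : ∀ t, 1 ≤ t → Measurable[𝒢 t] (X t)) (hD : ∀ t, 1 ≤ t → Measurable[𝒢 (t - 1)] (D t))
    (hG : ∀ t, 1 ≤ t → Measurable[𝒢 (t - 1)] (G t))
    (hG_mem : ∀ t ω, G t ω ∈ Icc (-(c / 2)) (c / 2))
    (hcond : ∀ t, 1 ≤ t → P[X t|𝒢 (t - 1)] =ᵐ[P] D t)
    (hX_bdd : ∀ t, 1 ≤ t → ∀ᵐ ω ∂P, |X t ω| ≤ c / 2)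
    (hu : IsSubExponentialUniformBoundary u β c) :
    P {ω | ∃ t, 1 ≤ t ∧ u (∑ i ∈ Finset.Icc 1 t, (X i ω - G i ω) ^ 2)
      ≤ |∑ i ∈ Finset.Icc 1 t, (X i ω - D i ω)|} ≤ ENNReal.ofReal β + ENNReal.ofReal β := by
  have hupper := measure_exists_le_sum_sub_le hc hX hD hG hG_mem hcond hX_bdd hu
  have hlower := measure_exists_le_sum_sub_le (X := -X) (D := -D) (G := -G) hc
    (fun t ht => (hX t ht).neg) (fun t ht => (hD t ht).neg) (fun t ht => (hG t ht).neg)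
    (fun t ω => by simpa only [Pi.neg_apply, neg_mem_Icc_iff, neg_neg] using hG_mem t ω)
    (fun t ht => (condExp_neg (X t) _).trans (hcond t ht).neg)
    (fun t ht => by simpa only [Pi.neg_apply, abs_neg] using hX_bdd t ht) hu
  simp only [Pi.neg_apply, neg_sub_neg, ← neg_sub (X _ _), neg_sq, Finset.sum_neg_distrib]
    at hlower
  refine (measure_mono ?_).trans ((measure_union_le _ _).trans (add_le_add hupper hlower))
  rintro ω ⟨t, ht, h⟩
  exact (le_abs.1 h).imp (fun h => ⟨t, ht, h⟩) fun h => ⟨t, ht, h⟩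

end Bernstein

theorem empirical_bernstein_confidence_sequence_general
    {Ω : Type*} {m0 : MeasurableSpace Ω} {P : Measure Ω} [IsProbabilityMeasure P]
    (𝒢 : Filtration ℕ m0)
    (c : ℝ) (hc : 0 < c) (α : ℝ) (hα : α ∈ Ioo (0:ℝ) 1)
    (δhat δ γ : ℕ → Ω → ℝ)
    (hδhat_adapted : ∀ t : ℕ, 1 ≤ t → Measurable[𝒢 t] (δhat t))
    (hδ_pred : ∀ t : ℕ, 1 ≤ t → Measurable[𝒢 (t - 1)] (δ t))
    (hγ_pred : ∀ t : ℕ, 1 ≤ t → Measurable[𝒢 (t - 1)] (γ t))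
    (hγ_mem : ∀ t ω, γ t ω ∈ Icc (-(c / 2)) (c / 2))
    (hcond : ∀ t : ℕ, 1 ≤ t → P[δhat t | 𝒢 (t - 1)] =ᵐ[P] δ t)
    (habs : ∀ t : ℕ, 1 ≤ t → ∀ᵐ ω ∂P, |δhat t ω| ≤ c / 2)
    (u : ℝ → ℝ) (hu : IsSubExponentialUniformBoundary u (α / 2) c) :
    ENNReal.ofReal (1 - α) ≤
      P {ω | ∀ t : ℕ, 1 ≤ t →
        |(1 / (t : ℝ)) * ∑ i ∈ Finset.Icc 1 t, δhat i ω
            - (1 / (t : ℝ)) * ∑ i ∈ Finset.Icc 1 t, δ i ω|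
          < u (∑ i ∈ Finset.Icc 1 t, (δhat i ω - γ i ω) ^ 2) / (t : ℝ)} := by
  set T := {ω | ∀ t : ℕ, 1 ≤ t →
    |(1 / (t : ℝ)) * ∑ i ∈ Finset.Icc 1 t, δhat i ω - (1 / (t : ℝ)) * ∑ i ∈ Finset.Icc 1 t, δ i ω|
      < u (∑ i ∈ Finset.Icc 1 t, (δhat i ω - γ i ω) ^ 2) / (t : ℝ)}
  have hbad : Tᶜ ⊆ {ω | ∃ t, 1 ≤ t ∧ u (∑ i ∈ Finset.Icc 1 t, (δhat i ω - γ i ω) ^ 2)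
      ≤ |∑ i ∈ Finset.Icc 1 t, (δhat i ω - δ i ω)|} := by
    intro ω hω
    simp only [T, mem_compl_iff, mem_ofPred_eq, not_forall, not_lt] at hω
    obtain ⟨t, ht, h⟩ := hω
    have ht₀ : (0 : ℝ) < t := by exact_mod_cast ht
    rw [← mul_sub, ← Finset.sum_sub_distrib, abs_mul, abs_of_pos (one_div_pos.2 ht₀),
      div_le_iff₀ ht₀, mul_comm, ← mul_assoc, mul_one_div_cancel ht₀.ne', one_mul] at h
    exact ⟨t, ht, h⟩
  have hcompl : P Tᶜ ≤ ENNReal.ofReal α := by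
    refine (measure_mono hbad).trans ((measure_exists_le_abs_sum_sub_le hc hδhat_adapted hδ_pred
      hγ_pred hγ_mem hcond habs hu).trans_eq ?_)
    rw [← ENNReal.ofReal_add (by linarith [hα.1]) (by linarith [hα.1]), add_halves]
  calc ENNReal.ofReal (1 - α) = 1 - ENNReal.ofReal α := by
        rw [ENNReal.ofReal_sub _ hα.1.le, ENNReal.ofReal_one]
    _ ≤ 1 - P Tᶜ := tsub_le_tsub_left hcompl 1
    _ ≤ P T := tsub_le_iff_right.2 (by simpa using measure_univ_le_add_compl (μ := P) T)

/-- **Theorem 2 (empirical-Bernstein confidence sequence).**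
Let `c > 0` and `α ∈ (0,1)`.  Suppose `E[δ̂_t | 𝒢_{t−1}] = δ_t` and `|δ̂_t| ≤ c/2` a.s. for
every `t ≥ 1`; let `(γ_t)_{t≥1}` be a `[−c/2, c/2]`-valued predictable process and set
`V̂_t = Σ_{i=1}^t (δ̂_i − γ_i)²`.  If `u` is a sub-exponential uniform boundary with crossing
probability `α/2` and scale `c`, then `P(∀ t ≥ 1, |Δ̂_t − Δ_t| < u(V̂_t)/t) ≥ 1 − α`. -/
theorem empirical_bernstein_confidence_sequence
    {Ω : Type*} {m0 : MeasurableSpace Ω} {P : Measure Ω} [IsProbabilityMeasure P]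
    (𝒢 : Filtration ℕ m0)
    (c : ℝ) (hc : 0 < c) (α : ℝ) (hα : α ∈ Ioo (0:ℝ) 1)
    (δhat δ γ : ℕ → Ω → ℝ)
    (hδhat_adapted : ∀ t : ℕ, 1 ≤ t → Measurable[𝒢 t] (δhat t))
    (hδhat_bdd : ∃ C : ℝ, ∀ t ω, |δhat t ω| ≤ C)
    (hδ_pred : ∀ t : ℕ, 1 ≤ t → Measurable[𝒢 (t - 1)] (δ t))
    (hδ_bdd : ∃ C : ℝ, ∀ t ω, |δ t ω| ≤ C)
    (hγ_pred : ∀ t : ℕ, 1 ≤ t → Measurable[𝒢 (t - 1)] (γ t))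
    (hγ_mem : ∀ t ω, γ t ω ∈ Icc (-(c / 2)) (c / 2))
    (hcond : ∀ t : ℕ, 1 ≤ t → P[δhat t | 𝒢 (t - 1)] =ᵐ[P] δ t)
    (habs : ∀ t : ℕ, 1 ≤ t → ∀ᵐ ω ∂P, |δhat t ω| ≤ c / 2)
    (u : ℝ → ℝ) (hu : IsSubExponentialUniformBoundary u (α / 2) c) :
    ENNReal.ofReal (1 - α) ≤
      P {ω | ∀ t : ℕ, 1 ≤ t →
        |(1 / (t : ℝ)) * ∑ i ∈ Finset.Icc 1 t, δhat i ω
            - (1 / (t : ℝ)) * ∑ i ∈ Finset.Icc 1 t, δ i ω|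
          < u (∑ i ∈ Finset.Icc 1 t, (δhat i ω - γ i ω) ^ 2) / (t : ℝ)} :=
  empirical_bernstein_confidence_sequence_general 𝒢 c hc α hα δhat δ γ hδhat_adapted hδ_pred hγ_pred
    hγ_mem hcond habs u hu
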